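/- For every ℓ ≥ 1 and every graph H on k ≥ ℓ+4 vertices, the alternating enumerator of the ℓ-scorpion property at H, defined as Ψ̂_ℓ(H) = (−1)^{|E(H)|} Σ_{S ⊆ E(H)} (−1)^{|S|} [H[S] is an ℓ-scorpion], is nonzero if and only if H is an ℓ-scorpion fossil. -/

import Mathlib

/-- `p = (b, t₁, …, t_ℓ, s)` witnesses that `G` is an `ℓ`-scorpion:
the entries of `p` are pairwise distinct and induce the path `b–t₁–⋯–t_ℓ–s`,
the body `b = p 0` is adjacent to all vertices outside the path (the legs),
and no other path vertex is adjacent to a leg. -/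
def ScorpionTuple {V : Type*} (G : SimpleGraph V) (ℓ : ℕ) (p : Fin (ℓ + 2) → V) : Prop :=
  Function.Injective p ∧
  (∀ i j : Fin (ℓ + 2), G.Adj (p i) (p j) ↔ (i.val + 1 = j.val ∨ j.val + 1 = i.val)) ∧
  (∀ v : V, v ∉ Set.range p → G.Adj (p 0) v) ∧
  (∀ i : Fin (ℓ + 2), i ≠ 0 → ∀ v : V, v ∉ Set.range p → ¬ G.Adj (p i) v)

/-- `G` is an `ℓ`-scorpion. -/
def IsScorpion {V : Type*} (G : SimpleGraph V) (ℓ : ℕ) : Prop :=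
  ∃ p : Fin (ℓ + 2) → V, ScorpionTuple G ℓ p

/-- `p` witnesses an `ℓ`-scorpion skeleton: an `ℓ`-scorpion whose legs form an
independent set. -/
def ScorpionSkeletonTuple {V : Type*} (G : SimpleGraph V) (ℓ : ℕ)
    (p : Fin (ℓ + 2) → V) : Prop :=
  ScorpionTuple G ℓ p ∧
  ∀ u v : V, u ∉ Set.range p → v ∉ Set.range p → ¬ G.Adj u v

/-- `H` is an `ℓ`-scorpion fossil: it is obtained from an `ℓ`-scorpion skeleton `S`
by adding edges `uv` such that at least one of `u, v` is not a leg. -/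
def IsScorpionFossil {V : Type*} (H : SimpleGraph V) (ℓ : ℕ) : Prop :=
  ∃ (S : SimpleGraph V) (p : Fin (ℓ + 2) → V),
    ScorpionSkeletonTuple S ℓ p ∧ S ≤ H ∧
    ∀ u v : V, H.Adj u v → S.Adj u v ∨ u ∈ Set.range p ∨ v ∈ Set.range p

/-! Once `ℓ ≥ 1` and there are at least `ℓ + 4` vertices, a scorpion has a unique witness
`p = (b, t₁, …, t_ℓ, s)`: the body `b` is the unique vertex of maximum degree `k - ℓ - 1`,
and the path is then forced vertex by vertex. So the alternating sum splits over the
candidate witnesses `p`. For a fixed `p`, `H[S]` is a scorpion witnessed by `p` iff the edges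
of `S` meeting the path are exactly the `k - 1` edges of the skeleton of `p`; the edges of `S`
between legs are free, so their alternating sum vanishes unless `H` has no edge between legs.
Hence `Ψ̂_ℓ(H) = ± #{p | H is a fossil over the skeleton of p}`. -/

open Finset

theorem Finset.sum_powerset_neg_one_pow_card_filter_eq {α : Type*} [DecidableEq α]
    (E F : Finset α) (q : α → Prop) [DecidablePred q] (hF : ∀ a ∈ F, q a) :
    ∑ S ∈ E.powerset, (if S.filter q = F then (-1 : ℤ) ^ S.card else 0) =
      if F ⊆ E ∧ ∀ a ∈ E, q a then (-1 : ℤ) ^ F.card else 0 := by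
  by_cases hFE : F ⊆ E
  swap
  · rw [if_neg (by tauto)]
    refine sum_eq_zero fun S hS => if_neg fun hSF => hFE ?_
    exact hSF ▸ (filter_subset q S).trans (mem_powerset.1 hS)
  have hdisj : ∀ T ⊆ E.filter (¬ q ·), Disjoint F T := fun T hT =>
    disjoint_left.2 fun a haF haT => (mem_filter.1 (hT haT)).2 (hF a haF)
  calc ∑ S ∈ E.powerset, (if S.filter q = F then (-1 : ℤ) ^ S.card else 0)
      = ∑ T ∈ (E.filter (¬ q ·)).powerset, (-1 : ℤ) ^ (F ∪ T).card := by
        rw [← sum_filter]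
        refine sum_nbij' (fun S => S.filter (¬ q ·)) (F ∪ ·) ?_ ?_ ?_ ?_ ?_
        · intro S hS
          simp only [mem_filter, mem_powerset] at hS ⊢
          exact filter_subset_filter _ hS.1
        · intro T hT
          simp only [mem_filter, mem_powerset, Finset.subset_iff] at hT ⊢
          refine ⟨by grind, ?_⟩
          ext a; simp only [mem_filter, mem_union]; grind
        · intro S hS
          rw [← (mem_filter.1 hS).2, filter_union_filter_not_eq]
        · intro T hT
          simp only [mem_powerset, Finset.subset_iff, mem_filter] at hT
          ext a; simp only [mem_filter, mem_union]; grind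
        · intro S hS
          rw [← (mem_filter.1 hS).2, filter_union_filter_not_eq]
    _ = (-1 : ℤ) ^ F.card * ∑ T ∈ (E.filter (¬ q ·)).powerset, (-1 : ℤ) ^ T.card := by
        rw [mul_sum]
        exact sum_congr rfl fun T hT => by
          rw [card_union_of_disjoint (hdisj T (mem_powerset.1 hT)), pow_add]
    _ = _ := by
        simp [sum_powerset_neg_one_pow_card, hFE, filter_eq_empty_iff]

theorem Fintype.ite_exists_eq_sum_ite {ι M : Type*} [Fintype ι] [AddCommMonoid M]
    {P : ι → Prop} [DecidablePred P] [Decidable (∃ i, P i)]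
    (hP : ∀ i j, P i → P j → i = j) (a : M) :
    (if ∃ i, P i then a else 0) = ∑ i, if P i then a else 0 := by
  split_ifs with h
  · obtain ⟨i, hi⟩ := h
    rw [Finset.sum_eq_single i (fun j _ hji => if_neg fun hj => hji (hP j i hj hi)) (by simp),
      if_pos hi]
  · exact (Finset.sum_eq_zero fun i _ => if_neg fun hi => h ⟨i, hi⟩).symm

theorem Finset.card_compl_image_univ {α β : Type*} [Fintype α] [Fintype β] [DecidableEq β]
    {f : α → β} (hf : Function.Injective f) :
    (univ.image f)ᶜ.card = Fintype.card β - Fintype.card α := by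
  rw [card_compl, card_image_of_injective _ hf, card_univ]

namespace ScorpionTuple

variable {V : Type*} {G : SimpleGraph V} {ℓ : ℕ} {p q : Fin (ℓ + 2) → V}

theorem exists_eq_of_adj (hp : ScorpionTuple G ℓ p) {i : Fin (ℓ + 2)} (hi : i ≠ 0) {v : V}
    (hv : G.Adj (p i) v) : ∃ j, p j = v ∧ (j.val + 1 = i.val ∨ i.val + 1 = j.val) := by
  by_cases hr : v ∈ Set.range p
  · obtain ⟨j, rfl⟩ := hr
    exact ⟨j, rfl, ((hp.2.1 i j).1 hv).symm⟩
  · exact absurd hv (hp.2.2.2 i hi v hr)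

section Degree

variable [Fintype V] [DecidableRel G.Adj]

theorem degree_le_two (hp : ScorpionTuple G ℓ p) {i : Fin (ℓ + 2)} (hi : i ≠ 0) :
    G.degree (p i) ≤ 2 := by
  by_contra! h3
  obtain ⟨x, hx, y, hy, z, hz, hxy, hxz, hyz⟩ := two_lt_card.1 h3
  obtain ⟨a, rfl, ha⟩ := hp.exists_eq_of_adj hi ((G.mem_neighborFinset _ _).1 hx)
  obtain ⟨b, rfl, hb⟩ := hp.exists_eq_of_adj hi ((G.mem_neighborFinset _ _).1 hy)
  obtain ⟨c, rfl, hc⟩ := hp.exists_eq_of_adj hi ((G.mem_neighborFinset _ _).1 hz)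
  have hval : ∀ {j k : Fin (ℓ + 2)}, p j ≠ p k → j.val ≠ k.val :=
    fun hjk h => hjk (congrArg p (Fin.ext h))
  have := hval hxy; have := hval hxz; have := hval hyz
  omega

theorem card_sub_le_degree_body [DecidableEq V] (hp : ScorpionTuple G ℓ p) :
    Fintype.card V - (ℓ + 1) ≤ G.degree (p 0) := by
  have hsub : insert (p 1) (univ.image p)ᶜ ⊆ G.neighborFinset (p 0) := by
    intro v hv
    rw [SimpleGraph.mem_neighborFinset]
    rcases mem_insert.1 hv with rfl | hv
    · exact (hp.2.1 0 1).2 (Or.inl (by simp))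
    · exact hp.2.2.1 v (by simpa using hv)
  have hk : ℓ + 2 ≤ Fintype.card V := by simpa using Fintype.card_le_of_injective p hp.1
  have := card_le_card hsub
  rw [card_insert_of_notMem (by simp), card_compl_image_univ hp.1, Fintype.card_fin] at this
  rw [← G.card_neighborFinset_eq_degree]
  omega

theorem degree_le_of_notMem [DecidableEq V] (hp : ScorpionTuple G ℓ p) {v : V}
    (hv : v ∉ Set.range p) :
    G.degree v ≤ Fintype.card V - (ℓ + 2) := by
  have hsub : G.neighborFinset v ⊆ insert (p 0) (((univ.image p)ᶜ).erase v) := by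
    intro w hw
    rw [SimpleGraph.mem_neighborFinset] at hw
    rw [mem_insert, mem_erase, mem_compl, mem_image]
    by_cases hr : w ∈ Set.range p
    · obtain ⟨j, rfl⟩ := hr
      left
      by_contra hj
      exact hp.2.2.2 j (fun h => hj (h ▸ rfl)) v hv hw.symm
    · exact Or.inr ⟨hw.ne', by simpa using hr⟩
  have hmem : v ∈ (univ.image p)ᶜ := by simpa using hv
  have hpos := card_pos.2 ⟨v, hmem⟩
  have := (card_le_card hsub).trans (card_insert_le _ _)
  rw [card_erase_of_mem hmem] at this
  rw [card_compl_image_univ hp.1, Fintype.card_fin] at this hpos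
  rw [← G.card_neighborFinset_eq_degree]
  omega

theorem degree_lt_degree_body (hp : ScorpionTuple G ℓ p) (hk : ℓ + 4 ≤ Fintype.card V)
    {v : V} (hv : v ≠ p 0) : G.degree v < G.degree (p 0) := by
  classical
  have hbody := hp.card_sub_le_degree_body
  by_cases hr : v ∈ Set.range p
  · obtain ⟨i, rfl⟩ := hr
    have := hp.degree_le_two (i := i) (by rintro rfl; exact hv rfl)
    omega
  · have := hp.degree_le_of_notMem hr
    omega

end Degree

theorem apply_zero_eq [Fintype V] (hp : ScorpionTuple G ℓ p) (hq : ScorpionTuple G ℓ q)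
    (hk : ℓ + 4 ≤ Fintype.card V) : q 0 = p 0 := by
  classical
  by_contra hne
  exact lt_asymm (hp.degree_lt_degree_body hk hne) (hq.degree_lt_degree_body hk (Ne.symm hne))

theorem apply_one_eq (hl : 1 ≤ ℓ) (hp : ScorpionTuple G ℓ p) (hq : ScorpionTuple G ℓ q)
    (h0 : q 0 = p 0) : q 1 = p 1 := by
  have hadj : G.Adj (p 0) (q 1) := h0 ▸ (hq.2.1 0 1).2 (Or.inl (by simp))
  by_cases hr : q 1 ∈ Set.range p
  · obtain ⟨j, hj⟩ := hr
    rw [← hj, hp.2.1, Fin.val_zero] at hadj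
    rw [← hj, show j = 1 from Fin.ext (by rw [Fin.val_one]; omega)]
  -- `q 1` would be a leg of `p`, so its neighbour `q 2` would be a leg of `p` too,
  -- hence adjacent to the body `p 0 = q 0`.
  exfalso
  let c : Fin (ℓ + 2) := ⟨2, by omega⟩
  have h1c : G.Adj (q 1) (q c) := (hq.2.1 1 c).2 (Or.inl (by simp [c]))
  have h0c : ¬ G.Adj (q 0) (q c) := by rw [hq.2.1]; simp [c]
  by_cases hc : q c ∈ Set.range p
  · obtain ⟨j, hj⟩ := hc
    have hj0 : j ≠ 0 := by
      rintro rfl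
      have := hq.1 (h0.trans hj)
      simp [c, Fin.ext_iff] at this
    exact hp.2.2.2 j hj0 _ hr (hj ▸ h1c.symm)
  · exact h0c (h0 ▸ hp.2.2.1 _ hc)

theorem apply_eq_of_apply_eq (hp : ScorpionTuple G ℓ p) (hq : ScorpionTuple G ℓ q)
    {a b c : Fin (ℓ + 2)} (hab : a.val + 1 = b.val) (hbc : b.val + 1 = c.val)
    (ha : q a = p a) (hb : q b = p b) : q c = p c := by
  have hadj : G.Adj (p b) (q c) := hb ▸ (hq.2.1 b c).2 (Or.inl hbc)
  obtain ⟨j, hj, hjb⟩ := hp.exists_eq_of_adj (by rintro rfl; simp at hab) hadj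
  rcases hjb with hjb | hjb
  · rw [show j = a from Fin.ext (by omega)] at hj
    have hca : c = a := hq.1 (hj.symm.trans ha.symm)
    rw [hca] at hbc
    omega
  · rw [← hj, show j = c from Fin.ext (by omega)]

theorem unique [Fintype V] (hl : 1 ≤ ℓ) (hk : ℓ + 4 ≤ Fintype.card V)
    (hp : ScorpionTuple G ℓ p) (hq : ScorpionTuple G ℓ q) : q = p := by
  have h0 := hp.apply_zero_eq hq hk
  have hpath : ∀ i : Fin (ℓ + 1), q i.castSucc = p i.castSucc ∧ q i.succ = p i.succ := by
    intro i
    induction i using Fin.induction with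
    | zero => exact ⟨h0, apply_one_eq hl hp hq h0⟩
    | succ i ih =>
      rw [← Fin.succ_castSucc]
      exact ⟨ih.2, hp.apply_eq_of_apply_eq hq (by simp) (by simp) ih.1 ih.2⟩
  funext i
  induction i using Fin.cases with
  | zero => exact h0
  | succ i => exact (hpath i).2

end ScorpionTuple

section Skeleton

variable {V : Type*} [Fintype V] [DecidableEq V] {ℓ : ℕ} {p : Fin (ℓ + 2) → V}

/-- The edge set of the `ℓ`-scorpion skeleton witnessed by `p`. -/
def scorpionEdges (ℓ : ℕ) (p : Fin (ℓ + 2) → V) : Finset (Sym2 V) :=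
  univ.image (fun i : Fin (ℓ + 1) => s(p i.castSucc, p i.succ)) ∪
    (univ.image p)ᶜ.image (fun v => s(p 0, v))

theorem mem_scorpionEdges {e : Sym2 V} :
    e ∈ scorpionEdges ℓ p ↔
      (∃ i : Fin (ℓ + 1), s(p i.castSucc, p i.succ) = e) ∨
        ∃ v ∉ Set.range p, s(p 0, v) = e := by
  simp [scorpionEdges]

theorem mk_mem_scorpionEdges_iff (hp : Function.Injective p) (i j : Fin (ℓ + 2)) :
    s(p i, p j) ∈ scorpionEdges ℓ p ↔ i.val + 1 = j.val ∨ j.val + 1 = i.val := by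
  simp only [mem_scorpionEdges, Sym2.eq_iff, hp.eq_iff, Fin.ext_iff]
  constructor
  · rintro (⟨a, ⟨h1, h2⟩ | ⟨h1, h2⟩⟩ | ⟨v, hv, ⟨-, rfl⟩ | ⟨-, rfl⟩⟩)
    · simp only [Fin.val_castSucc, Fin.val_succ] at h1 h2; omega
    · simp only [Fin.val_castSucc, Fin.val_succ] at h1 h2; omega
    · exact absurd ⟨j, rfl⟩ hv
    · exact absurd ⟨i, rfl⟩ hv
  · rintro (h | h)
    · exact Or.inl ⟨⟨i, by omega⟩, Or.inl ⟨rfl, by simp; omega⟩⟩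
    · exact Or.inl ⟨⟨j, by omega⟩, Or.inr ⟨by simp, by simpa using h⟩⟩

theorem mk_mem_scorpionEdges_iff_of_notMem (hp : Function.Injective p) (i : Fin (ℓ + 2))
    {v : V} (hv : v ∉ Set.range p) : s(p i, v) ∈ scorpionEdges ℓ p ↔ i = 0 := by
  simp only [mem_scorpionEdges, Sym2.eq_iff]
  constructor
  · rintro (⟨a, ⟨-, h⟩ | ⟨h, -⟩⟩ | ⟨w, -, ⟨h, -⟩ | ⟨h, -⟩⟩)
    · exact absurd ⟨_, h⟩ hv
    · exact absurd ⟨_, h⟩ hv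
    · exact hp h.symm
    · exact absurd ⟨_, h⟩ hv
  · rintro rfl
    exact Or.inr ⟨v, hv, Or.inl ⟨rfl, rfl⟩⟩

theorem exists_mem_of_mem_scorpionEdges {e : Sym2 V} (he : e ∈ scorpionEdges ℓ p) :
    ∃ i, p i ∈ e := by
  rcases mem_scorpionEdges.1 he with ⟨a, rfl⟩ | ⟨v, -, rfl⟩
  · exact ⟨a.castSucc, Sym2.mem_mk_left _ _⟩
  · exact ⟨0, Sym2.mem_mk_left _ _⟩

theorem not_isDiag_of_mem_scorpionEdges (hp : Function.Injective p) {e : Sym2 V}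
    (he : e ∈ scorpionEdges ℓ p) : ¬ e.IsDiag := by
  induction e using Sym2.ind with | _ u v => ?_
  rintro (rfl : u = v)
  obtain ⟨i, hi⟩ := exists_mem_of_mem_scorpionEdges he
  obtain rfl : p i = u := by simpa using hi
  simpa using (mk_mem_scorpionEdges_iff hp i i).1 he

theorem card_scorpionEdges (hp : Function.Injective p) :
    (scorpionEdges ℓ p).card = Fintype.card V - 1 := by
  have hk : ℓ + 2 ≤ Fintype.card V := by simpa using Fintype.card_le_of_injective p hp
  rw [scorpionEdges, card_union_of_disjoint, card_image_of_injective, card_image_of_injOn,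
    card_compl_image_univ hp, card_univ, Fintype.card_fin, Fintype.card_fin]
  · omega
  · intro v _ w _ h
    exact Sym2.congr_right.1 h
  · intro a b h
    rcases Sym2.eq_iff.1 h with ⟨h1, -⟩ | ⟨h1, h2⟩
    · exact Fin.castSucc_injective _ (hp h1)
    · have := congrArg Fin.val (hp h1); have := congrArg Fin.val (hp h2)
      simp only [Fin.val_castSucc, Fin.val_succ] at *
      omega
  · simp only [disjoint_left, mem_image, mem_univ, true_and, mem_compl, not_exists]
    rintro _ ⟨a, rfl⟩ v ⟨hv, h⟩
    rcases Sym2.eq_iff.1 h with ⟨-, h⟩ | ⟨-, h⟩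
    · exact hv _ h.symm
    · exact hv _ h.symm

theorem scorpionTuple_iff {G : SimpleGraph V} :
    ScorpionTuple G ℓ p ↔
      Function.Injective p ∧ ∀ i v, G.Adj (p i) v ↔ s(p i, v) ∈ scorpionEdges ℓ p := by
  constructor
  · rintro ⟨hp, hpath, hbody, hlegs⟩
    refine ⟨hp, fun i v => ?_⟩
    by_cases hv : v ∈ Set.range p
    · obtain ⟨j, rfl⟩ := hv
      rw [hpath, mk_mem_scorpionEdges_iff hp]
    · rw [mk_mem_scorpionEdges_iff_of_notMem hp i hv]
      exact ⟨fun h => by_contra fun hi => hlegs i hi v hv h, by rintro rfl; exact hbody v hv⟩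
  · rintro ⟨hp, hadj⟩
    refine ⟨hp, fun i j => ?_, fun v hv => ?_, fun i hi v hv => ?_⟩
    · rw [hadj, mk_mem_scorpionEdges_iff hp]
    · rw [hadj, mk_mem_scorpionEdges_iff_of_notMem hp 0 hv]
    · rwa [hadj, mk_mem_scorpionEdges_iff_of_notMem hp i hv]

theorem scorpionTuple_fromEdgeSet_iff {S : Finset (Sym2 V)} (hS : ∀ e ∈ S, ¬ e.IsDiag) :
    ScorpionTuple (SimpleGraph.fromEdgeSet (↑S : Set (Sym2 V))) ℓ p ↔
      Function.Injective p ∧ S.filter (fun e => ∃ i, p i ∈ e) = scorpionEdges ℓ p := by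
  have hadj : ∀ u v, (SimpleGraph.fromEdgeSet (↑S : Set (Sym2 V))).Adj u v ↔ s(u, v) ∈ S :=
    fun u v => by
      rw [SimpleGraph.fromEdgeSet_adj, mem_coe, and_iff_left_iff_imp]
      rintro huv rfl
      exact hS _ huv (Sym2.mk_isDiag_iff.2 rfl)
  simp only [scorpionTuple_iff, hadj]
  refine and_congr_right fun hp => ⟨fun h => ?_, fun h i v => ?_⟩
  · ext e
    rw [mem_filter]
    constructor
    · rintro ⟨he, i, hi⟩
      obtain ⟨w, rfl⟩ := Sym2.mem_iff_exists.1 hi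
      exact (h i w).1 he
    · intro he
      obtain ⟨i, hi⟩ := exists_mem_of_mem_scorpionEdges he
      obtain ⟨w, rfl⟩ := Sym2.mem_iff_exists.1 hi
      exact ⟨(h i w).2 he, i, hi⟩
  · rw [← h, mem_filter, iff_self_and]
    exact fun _ => ⟨i, Sym2.mem_mk_left _ _⟩

theorem isScorpionFossil_iff {H : SimpleGraph V} [DecidableRel H.Adj] :
    IsScorpionFossil H ℓ ↔ ∃ p : Fin (ℓ + 2) → V, Function.Injective p ∧
      scorpionEdges ℓ p ⊆ H.edgeFinset ∧ ∀ e ∈ H.edgeFinset, ∃ i, p i ∈ e := by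
  constructor
  · rintro ⟨S, p, ⟨hS, hlegs⟩, hSH, hcover⟩
    obtain ⟨hp, hSadj⟩ := scorpionTuple_iff.1 hS
    refine ⟨p, hp, fun e he => ?_, fun e he => ?_⟩
    · obtain ⟨i, hi⟩ := exists_mem_of_mem_scorpionEdges he
      obtain ⟨w, rfl⟩ := Sym2.mem_iff_exists.1 hi
      exact SimpleGraph.mem_edgeFinset.2 (hSH ((hSadj i w).2 he))
    · induction e using Sym2.ind with | _ u v => ?_
      have huv : H.Adj u v := SimpleGraph.mem_edgeFinset.1 he
      by_cases hu : u ∈ Set.range p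
      · obtain ⟨i, rfl⟩ := hu
        exact ⟨i, Sym2.mem_mk_left _ _⟩
      by_cases hv : v ∈ Set.range p
      · obtain ⟨i, rfl⟩ := hv
        exact ⟨i, Sym2.mem_mk_right _ _⟩
      exact ((hcover u v huv).resolve_left (hlegs u v hu hv)).elim (absurd · hu) (absurd · hv)
  · rintro ⟨p, hp, hsub, hcover⟩
    set S := SimpleGraph.fromEdgeSet (↑(scorpionEdges ℓ p) : Set (Sym2 V))
    have hadj : ∀ u v, S.Adj u v → s(u, v) ∈ scorpionEdges ℓ p :=
      fun u v huv => ((SimpleGraph.fromEdgeSet_adj _).1 huv).1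
    refine ⟨S, p, ⟨?_, fun u v hu hv huv => ?_⟩, fun u v huv => ?_, fun u v huv => ?_⟩
    · refine (scorpionTuple_fromEdgeSet_iff (fun e => not_isDiag_of_mem_scorpionEdges hp)).2
        ⟨hp, filter_true_of_mem fun e => exists_mem_of_mem_scorpionEdges⟩
    · obtain ⟨i, hi⟩ := exists_mem_of_mem_scorpionEdges (hadj u v huv)
      rcases Sym2.mem_iff.1 hi with h | h
      · exact hu ⟨i, h⟩
      · exact hv ⟨i, h⟩
    · exact SimpleGraph.mem_edgeFinset.1 (hsub (hadj u v huv))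
    · obtain ⟨i, hi⟩ := hcover s(u, v) (SimpleGraph.mem_edgeFinset.2 huv)
      rcases Sym2.mem_iff.1 hi with h | h
      · exact Or.inr (Or.inl ⟨i, h⟩)
      · exact Or.inr (Or.inr ⟨i, h⟩)

open Classical in
theorem sum_powerset_edgeFinset_isScorpion (H : SimpleGraph V) [DecidableRel H.Adj]
    (hl : 1 ≤ ℓ) (hk : ℓ + 4 ≤ Fintype.card V) :
    ∑ S ∈ H.edgeFinset.powerset, (-1 : ℤ) ^ S.card *
        (if IsScorpion (SimpleGraph.fromEdgeSet (↑S : Set (Sym2 V))) ℓ then 1 else 0) =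
      (-1 : ℤ) ^ (Fintype.card V - 1) *
        #{p : Fin (ℓ + 2) → V | Function.Injective p ∧
          scorpionEdges ℓ p ⊆ H.edgeFinset ∧ ∀ e ∈ H.edgeFinset, ∃ i, p i ∈ e} := by
  calc _ = ∑ S ∈ H.edgeFinset.powerset, ∑ p : Fin (ℓ + 2) → V,
        if ScorpionTuple (SimpleGraph.fromEdgeSet (↑S : Set (Sym2 V))) ℓ p
          then (-1 : ℤ) ^ S.card else 0 := by
        refine sum_congr rfl fun S _ => ?_
        rw [mul_ite, mul_one, mul_zero, IsScorpion]
        convert Fintype.ite_exists_eq_sum_ite (fun p q hp hq => ScorpionTuple.unique hl hk hq hp) _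
    _ = ∑ p : Fin (ℓ + 2) → V, if Function.Injective p then
          ∑ S ∈ H.edgeFinset.powerset,
            if S.filter (fun e => ∃ i, p i ∈ e) = scorpionEdges ℓ p
              then (-1 : ℤ) ^ S.card else 0
        else 0 := by
        rw [sum_comm]
        refine sum_congr rfl fun p _ => ?_
        split_ifs with hp
        · refine sum_congr rfl fun S hS => ?_
          have hdiag : ∀ e ∈ S, ¬ e.IsDiag := fun e he =>
            H.not_isDiag_of_mem_edgeSet (SimpleGraph.mem_edgeFinset.1 (mem_powerset.1 hS he))
          simp only [scorpionTuple_fromEdgeSet_iff hdiag, hp, true_and]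
        · exact sum_eq_zero fun S _ => if_neg fun h => hp h.1
    _ = _ := by
        simp_rw [sum_powerset_neg_one_pow_card_filter_eq _ _ _
          (fun _ => exists_mem_of_mem_scorpionEdges)]
        rw [card_filter, Nat.cast_sum, mul_sum]
        refine sum_congr rfl fun p _ => ?_
        by_cases hp : Function.Injective p
        · simp only [hp, true_and, if_true, card_scorpionEdges hp]
          split_ifs <;> simp
        · simp [hp]

end Skeleton

open Classical in
/-- The alternating enumerator of the `ℓ`-scorpion property at a graph `H` on
`k ≥ ℓ+4` vertices is nonzero if and only if `H` is an `ℓ`-scorpion fossil. -/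
theorem stmt_14 {V : Type*} [Fintype V] [DecidableEq V] (H : SimpleGraph V)
    [DecidableRel H.Adj] (ℓ : ℕ) (hl : 1 ≤ ℓ) (hcard : ℓ + 4 ≤ Fintype.card V) :
    ((-1 : ℤ) ^ H.edgeFinset.card *
        ∑ S ∈ H.edgeFinset.powerset, (-1 : ℤ) ^ S.card *
          (if IsScorpion (SimpleGraph.fromEdgeSet (↑S : Set (Sym2 V))) ℓ then 1 else 0)) ≠ 0
      ↔ IsScorpionFossil H ℓ := by
  rw [sum_powerset_edgeFinset_isScorpion H hl hcard, isScorpionFossil_iff]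
  simp [filter_eq_empty_iff]
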